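/- arXiv:1112.4306 — 2 statements merged into one kernel-verified Lean document; each statement's English description precedes it below -/
import Mathlib

section
/- Let 𝒜 be an arrangement of 9 pairwise distinct lines in ℂℙ² such that no point lies on five or more lines of 𝒜 and every line of 𝒜 passes through at least three multiple points of 𝒜. Then 𝒜 has at most one quadruple point, i.e. at most one point lies on exactly four lines of 𝒜. -/
/-- We work with the complex projective plane modeled on ℂ³:
points of ℂℙ² are 1-dimensional linear subspaces of ℂ³ and lines are
2-dimensional linear subspaces. -/
abbrev V3 := Fin 3 → ℂ

/-- A point of ℂℙ², viewed as a 1-dimensional subspace of ℂ³. -/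
def IsPoint (p : Submodule ℂ V3) : Prop := Module.finrank ℂ p = 1

/-- A line of ℂℙ², viewed as a 2-dimensional subspace of ℂ³. -/
def IsLine (L : Submodule ℂ V3) : Prop := Module.finrank ℂ L = 2

/-- The multiplicity of a point `p` in the arrangement `A`:
the number of lines of `A` passing through `p`. -/
noncomputable def mult (A : Finset (Submodule ℂ V3)) (p : Submodule ℂ V3) : ℕ :=
  {L | L ∈ A ∧ p ≤ L}.ncard

/-- `nPts A r` is the number `n_r` of points of multiplicity exactly `r` in `A`. -/
noncomputable def nPts (A : Finset (Submodule ℂ V3)) (r : ℕ) : ℕ :=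
  {p | IsPoint p ∧ mult A p = r}.ncard
set_option maxHeartbeats 1000000
open scoped Classical
open Submodule

noncomputable def pts (A : Finset (Submodule ℂ V3)) (L : Submodule ℂ V3) :
    Finset (Submodule ℂ V3) := (A.erase L).image (fun M => M ⊓ L)




lemma finrank_V3 : Module.finrank ℂ V3 = 3 := by
  simp [Module.finrank_pi]

lemma mult_eq_card (A : Finset (Submodule ℂ V3)) (p : Submodule ℂ V3) :
    mult A p = (A.filter (fun L => p ≤ L)).card := by
  classical
  rw [mult]
  rw [show {L | L ∈ A ∧ p ≤ L} = ↑(A.filter (fun L => p ≤ L)) by ext L; simp]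
  exact Set.ncard_coe_finset _

-- two distinct lines meet in a point
lemma line_inf_point {L M : Submodule ℂ V3} (hL : IsLine L) (hM : IsLine M) (hne : L ≠ M) :
    IsPoint (L ⊓ M) := by
  have hsup : Module.finrank ℂ ↥(L ⊔ M) ≤ 3 := by
    have := Submodule.finrank_le (L ⊔ M); simpa [finrank_V3] using this
  have key := Submodule.finrank_sup_add_finrank_inf_eq L M
  rw [hL, hM] at key
  have hL2 : Module.finrank ℂ L = 2 := hL
  have hinf_le : Module.finrank ℂ ↥(L ⊓ M) ≤ 2 := by
    have h1 : L ⊓ M ≤ L := inf_le_left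
    have := Submodule.finrank_mono h1
    omega
  have : Module.finrank ℂ ↥(L ⊓ M) ≠ 2 := by
    intro h2
    have h1 : L ⊓ M ≤ L := inf_le_left
    have hLM : L ⊓ M = L := Submodule.eq_of_le_of_finrank_eq h1 (by rw [h2, hL])
    have h1' : L ⊓ M ≤ M := inf_le_right
    have hLM' : L ⊓ M = M := Submodule.eq_of_le_of_finrank_eq h1' (by rw [h2, hM])
    exact hne (hLM.symm.trans hLM')
  have : Module.finrank ℂ ↥(L ⊓ M) = 1 := by omega
  exact this

-- a point contained in a point equals it
lemma point_le_point {p x : Submodule ℂ V3} (hp : IsPoint p) (hx : IsPoint x) (h : p ≤ x) :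
    p = x := Submodule.eq_of_le_of_finrank_eq h (by rw [hp, hx])

-- point on two distinct lines is the intersection
lemma point_eq_inf {p L M : Submodule ℂ V3} (hp : IsPoint p) (hL : IsLine L) (hM : IsLine M)
    (hne : L ≠ M) (h1 : p ≤ L) (h2 : p ≤ M) : p = L ⊓ M :=
  point_le_point hp (line_inf_point hL hM hne) (le_inf h1 h2)

-- two distinct points span a line; any line through both equals the span
lemma sup_of_points {p q : Submodule ℂ V3} (hp : IsPoint p) (hq : IsPoint q) (hne : p ≠ q) :
    Module.finrank ℂ ↥(p ⊔ q) = 2 := by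
  have key := Submodule.finrank_sup_add_finrank_inf_eq p q
  rw [hp, hq] at key
  have hinf : Module.finrank ℂ ↥(p ⊓ q) = 0 := by
    by_contra h
    have h1 : Module.finrank ℂ ↥(p ⊓ q) ≤ 1 := by
      have := Submodule.finrank_mono (inf_le_left : p ⊓ q ≤ p)
      have hp2 : Module.finrank ℂ p = 1 := hp
      omega
    have h2 : Module.finrank ℂ ↥(p ⊓ q) = 1 := by omega
    have e1 : p ⊓ q = p := Submodule.eq_of_le_of_finrank_eq inf_le_left (by rw [h2, hp])
    have e2 : p ⊓ q = q := Submodule.eq_of_le_of_finrank_eq inf_le_right (by rw [h2, hq])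
    exact hne (e1.symm.trans e2)
  omega

lemma line_eq_sup {p q L : Submodule ℂ V3} (hp : IsPoint p) (hq : IsPoint q) (hne : p ≠ q)
    (hL : IsLine L) (h1 : p ≤ L) (h2 : q ≤ L) : L = p ⊔ q :=
  (Submodule.eq_of_le_of_finrank_eq (sup_le h1 h2) (by rw [sup_of_points hp hq hne, hL])).symm

-- unique line through two distinct points
lemma line_unique {p q L M : Submodule ℂ V3} (hp : IsPoint p) (hq : IsPoint q) (hne : p ≠ q)
    (hL : IsLine L) (hM : IsLine M) (h1 : p ≤ L) (h2 : q ≤ L) (h3 : p ≤ M) (h4 : q ≤ M) :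
    L = M := by
  rw [line_eq_sup hp hq hne hL h1 h2, line_eq_sup hp hq hne hM h3 h4]

open Submodule

lemma point_gen {p : Submodule ℂ V3} (hp : IsPoint p) : ∃ v : V3, v ≠ 0 ∧ p = span ℂ {v} := by
  have h1 : Module.finrank ℂ p ≤ 1 := le_of_eq hp
  rw [Submodule.finrank_le_one_iff_isPrincipal] at h1
  obtain ⟨v, hv⟩ := h1
  refine ⟨v, ?_, hv⟩
  rintro rfl
  rw [hv] at hp
  rw [span_zero_singleton] at hp
  have : Module.finrank ℂ (⊥ : Submodule ℂ V3) = 0 := finrank_bot ℂ V3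
  rw [IsPoint] at hp
  omega

lemma isPoint_span {v : V3} (hv : v ≠ 0) : IsPoint (span ℂ {v}) :=
  finrank_span_singleton hv

lemma isLine_span_pair2 {x y : V3} (h : LinearIndependent ℂ ![x, y]) :
    IsLine (span ℂ {x, y}) := by
  have h2 := finrank_span_eq_card (R := ℂ) h
  have hr : Set.range ![x, y] = {x, y} := by
    ext z
    simp [Matrix.range_cons, Matrix.range_empty]
    tauto
  rw [hr] at h2
  simpa [IsLine] using h2

lemma line_eq_pair {L : Submodule ℂ V3} (hL : IsLine L) {x y : V3}
    (hxy : LinearIndependent ℂ ![x, y]) (hx : x ∈ L) (hy : y ∈ L) : L = span ℂ {x, y} := by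
  symm
  apply Submodule.eq_of_le_of_finrank_eq
  · apply span_le.2
    rintro z hz
    rcases hz with rfl | hz
    · exact hx
    · rw [Set.mem_singleton_iff] at hz; subst hz; exact hy
  · rw [isLine_span_pair2 hxy, hL]

section Tri
variable {w1 w2 w3 : V3} (hli : LinearIndependent ℂ ![w1, w2, w3])
include hli

lemma tri_coords {a b c : ℂ} (h : a • w1 + b • w2 + c • w3 = 0) : a = 0 ∧ b = 0 ∧ c = 0 := by
  have := Fintype.linearIndependent_iff.1 hli ![a, b, c] (by
    simpa [Fin.sum_univ_three, add_assoc] using h)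
  exact ⟨this 0, this 1, this 2⟩

lemma tri_pair_li (m : ℂ) : LinearIndependent ℂ ![w1, m • w2 + w3] := by
  rw [LinearIndependent.pair_iff]
  intro s t hst
  have : s • w1 + (t * m) • w2 + t • w3 = 0 := by
    rw [← hst]; module
  obtain ⟨h1, h2, h3⟩ := tri_coords hli this
  exact ⟨h1, h3⟩

lemma tri_pair_li12 : LinearIndependent ℂ ![w1, w2] := by
  rw [LinearIndependent.pair_iff]
  intro s t hst
  have : s • w1 + t • w2 + (0:ℂ) • w3 = 0 := by
    rw [← hst]; module
  obtain ⟨h1, h2, h3⟩ := tri_coords hli this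
  exact ⟨h1, h2⟩

lemma tri_span_top : span ℂ {w1, w2, w3} = ⊤ := by
  apply Submodule.eq_top_of_finrank_eq
  have h2 := finrank_span_eq_card (R := ℂ) hli
  have hr : Set.range ![w1, w2, w3] = {w1, w2, w3} := by
    ext z
    simp [Matrix.range_cons, Matrix.range_empty]
    tauto
  rw [hr] at h2
  rw [finrank_V3]
  simpa using h2

lemma tri_repr (u : V3) : ∃ a b c : ℂ, u = a • w1 + b • w2 + c • w3 := by
  have hu : u ∈ span ℂ ({w1, w2, w3} : Set V3) := by rw [tri_span_top hli]; trivial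
  rw [Submodule.mem_span_insert] at hu
  obtain ⟨a, z, hz, rfl⟩ := hu
  rw [Submodule.mem_span_insert] at hz
  obtain ⟨b, z', hz', rfl⟩ := hz
  rw [Submodule.mem_span_singleton] at hz'
  obtain ⟨c, rfl⟩ := hz'
  exact ⟨a, b, c, by module⟩

/-- classification of lines through `span w1` other than `span {w1, w2}` -/
lemma line_through_classify {L : Submodule ℂ V3} (hL : IsLine L)
    (h1 : span ℂ {w1} ≤ L) (hne : L ≠ span ℂ {w1, w2}) :
    ∃ m : ℂ, L = span ℂ {w1, m • w2 + w3} := by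
  have hw1L : w1 ∈ L := h1 (mem_span_singleton_self w1)
  have hnotle : ¬ (L ≤ span ℂ {w1}) := by
    intro hle
    have hmono := Submodule.finrank_mono hle
    have h2 : Module.finrank ℂ L = 2 := hL
    have hw1 : w1 ≠ 0 := by
      rintro rfl
      have := hli.ne_zero 0; simp at this
    have := finrank_span_singleton (K := ℂ) hw1
    omega
  obtain ⟨u, huL, hu1⟩ := Set.not_subset.1 hnotle
  obtain ⟨a, b, c, rfl⟩ := tri_repr hli u
  have hc : c ≠ 0 := by
    rintro rfl
    apply hne
    have hw2L : w2 ∈ L := by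
      have hb : b ≠ 0 := by
        rintro rfl
        exact hu1 (mem_span_singleton.2 ⟨a, by module⟩)
      have : w2 = b⁻¹ • (a • w1 + b • w2 + (0:ℂ) • w3) - (b⁻¹ * a) • w1 := by
        match_scalars <;> field_simp <;> ring
      rw [this]
      exact sub_mem (smul_mem _ _ huL) (smul_mem _ _ hw1L)
    exact line_eq_pair hL (tri_pair_li12 hli) hw1L hw2L
  refine ⟨b / c, line_eq_pair hL (tri_pair_li hli (b / c)) hw1L ?_⟩
  have : (b / c) • w2 + w3 = c⁻¹ • (a • w1 + b • w2 + c • w3) - (c⁻¹ * a) • w1 := by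
    match_scalars <;> field_simp <;> ring
  rw [this]
  exact sub_mem (smul_mem _ _ huL) (smul_mem _ _ hw1L)

/-- the grid point of two transversal lines -/
lemma grid_point {x : Submodule ℂ V3} (hx : IsPoint x) {m n : ℂ}
    (hxP : x ≤ span ℂ {w1, m • w2 + w3}) (hxQ : x ≤ span ℂ {w2, n • w1 + w3}) :
    x = span ℂ {n • w1 + m • w2 + w3} := by
  have hQli : LinearIndependent ℂ ![w2, n • w1 + w3] :=
    tri_pair_li (w1 := w2) (w2 := w1) (w3 := w3) (by
      have : ![w2, w1, w3] = ![w1, w2, w3] ∘ (Equiv.swap (0 : Fin 3) 1) := by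
        ext i; fin_cases i <;> rfl
      rw [this]
      exact hli.comp _ (Equiv.injective _)) n
  have hP : IsLine (span ℂ {w1, m • w2 + w3}) := isLine_span_pair2 (tri_pair_li hli m)
  have hQ : IsLine (span ℂ {w2, n • w1 + w3}) := isLine_span_pair2 hQli
  have hgne : (0:V3) ≠ n • w1 + m • w2 + w3 := by
    intro h
    have h' : n • w1 + m • w2 + (1:ℂ) • w3 = 0 := by rw [← h.symm]; module
    obtain ⟨_, _, h3⟩ := tri_coords hli h'
    exact one_ne_zero h3
  have hPne : span ℂ {w1, m • w2 + w3} ≠ span ℂ {w2, n • w1 + w3} := by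
    intro h
    have hw1 : w1 ∈ span ℂ ({w2, n • w1 + w3} : Set V3) := by
      rw [← h]; exact subset_span (Set.mem_insert _ _)
    rw [mem_span_pair] at hw1
    obtain ⟨α, β, hab⟩ := hw1
    have : (β * n - 1) • w1 + α • w2 + β • w3 = 0 := by
      linear_combination (norm := module) hab
    obtain ⟨h1, h2, h3⟩ := tri_coords hli this
    rw [h3] at h1; simp at h1
  have hgP : n • w1 + m • w2 + w3 ∈ span ℂ ({w1, m • w2 + w3} : Set V3) :=
    mem_span_pair.2 ⟨n, 1, by module⟩
  have hgQ : n • w1 + m • w2 + w3 ∈ span ℂ ({w2, n • w1 + w3} : Set V3) :=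
    mem_span_pair.2 ⟨m, 1, by module⟩
  have hxinf := point_eq_inf hx hP hQ hPne hxP hxQ
  have hgpt : IsPoint (span ℂ {n • w1 + m • w2 + w3}) := isPoint_span (Ne.symm hgne)
  have hle : span ℂ {n • w1 + m • w2 + w3} ≤ span ℂ {w1, m • w2 + w3} ⊓ span ℂ {w2, n • w1 + w3} :=
    span_le.2 (by rintro z rfl; exact ⟨hgP, hgQ⟩)
  have := point_le_point hgpt (by rw [← hxinf]; exact hx) hle
  rw [hxinf, ← this]

/-- incidence of the grid point with a line through `span (w1+w2)` -/
lemma grid_mem_iff (m n c : ℂ) :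
    span ℂ {n • w1 + m • w2 + w3} ≤ span ℂ {w1 + w2, c • w1 + w3} ↔ n = m + c := by
  constructor
  · intro h
    have := h (mem_span_singleton_self _)
    rw [mem_span_pair] at this
    obtain ⟨α, β, hab⟩ := this
    have : (α + β * c - n) • w1 + (α - m) • w2 + (β - 1) • w3 = 0 := by
      linear_combination (norm := module) hab
    obtain ⟨h1, h2, h3⟩ := tri_coords hli this
    have hβ : β = 1 := by linear_combination h3
    have hα : α = m := by linear_combination h2
    rw [hβ, hα] at h1
    linear_combination -h1
  · rintro rfl
    rw [span_le]
    rintro z rfl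
    exact mem_span_pair.2 ⟨m, 1, by module⟩

end Tri


section Count
variable {A : Finset (Submodule ℂ V3)}
variable (hlines : ∀ L ∈ A, IsLine L)
include hlines

lemma pts_isPoint {L x : Submodule ℂ V3} (hLA : L ∈ A) (hx : x ∈ pts A L) :
    IsPoint x ∧ x ≤ L := by
  rw [pts, Finset.mem_image] at hx
  obtain ⟨M, hM, rfl⟩ := hx
  have hMne := Finset.ne_of_mem_erase hM
  have hMA := Finset.mem_of_mem_erase hM
  exact ⟨line_inf_point (hlines M hMA) (hlines L hLA) hMne, inf_le_right⟩

lemma mem_pts {L x : Submodule ℂ V3} (hLA : L ∈ A) (hx : IsPoint x) (hxL : x ≤ L)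
    (hm : 2 ≤ mult A x) : x ∈ pts A L := by
  rw [mult_eq_card] at hm
  have : ∃ M ∈ A.filter (fun M => x ≤ M), M ≠ L := by
    by_contra h
    push_neg at h
    have : A.filter (fun M => x ≤ M) ⊆ {L} := fun M hM => Finset.mem_singleton.2 (h M hM)
    have := Finset.card_le_card this
    simp at this; omega
  obtain ⟨M, hM, hMne⟩ := this
  rw [Finset.mem_filter] at hM
  rw [pts, Finset.mem_image]
  exact ⟨M, Finset.mem_erase.2 ⟨hMne, hM.1⟩,
    (point_eq_inf hx (hlines M hM.1) (hlines L hLA) hMne hM.2 hxL).symm⟩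

/-- Per-line sum: ∑ over intersection points on L of (mult − 1) = |A| − 1. -/
lemma line_sum {L : Submodule ℂ V3} (hLA : L ∈ A) :
    ∑ x ∈ pts A L, (mult A x - 1) = A.card - 1 := by
  have hcard : (A.erase L).card = A.card - 1 := Finset.card_erase_of_mem hLA
  rw [← hcard]
  rw [Finset.card_eq_sum_card_fiberwise (f := fun M => M ⊓ L) (t := pts A L)
    (fun M hM => Finset.mem_image_of_mem _ hM)]
  apply Finset.sum_congr rfl
  intro x hx
  obtain ⟨hxp, hxL⟩ := pts_isPoint hlines hLA hx
  have : (A.erase L).filter (fun M => M ⊓ L = x) = (A.filter (fun M => x ≤ M)).erase L := by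
    ext M
    simp only [Finset.mem_filter, Finset.mem_erase]
    constructor
    · rintro ⟨⟨hne, hMA⟩, rfl⟩
      exact ⟨hne, hMA, inf_le_left⟩
    · rintro ⟨hne, hMA, hxM⟩
      exact ⟨⟨hne, hMA⟩, (point_eq_inf hxp (hlines M hMA) (hlines L hLA) hne hxM hxL).symm⟩
  rw [this, Finset.card_erase_of_mem, mult_eq_card]
  rw [Finset.mem_filter]
  exact ⟨hLA, hxL⟩

/-- the number of multiple points on a line, as a Finset card -/
lemma h3_finset {L : Submodule ℂ V3} (hLA : L ∈ A)
    (h3 : 3 ≤ {p | IsPoint p ∧ 3 ≤ mult A p ∧ p ≤ L}.ncard) :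
    3 ≤ ((pts A L).filter (fun x => 3 ≤ mult A x)).card := by
  have hset : {p | IsPoint p ∧ 3 ≤ mult A p ∧ p ≤ L}
      = ↑((pts A L).filter (fun x => 3 ≤ mult A x)) := by
    ext x
    simp only [Set.mem_setOf_eq, Finset.coe_filter, Finset.mem_coe]
    constructor
    · rintro ⟨hx, hm, hxL⟩
      exact ⟨mem_pts hlines hLA hx hxL (by omega), hm⟩
    · rintro ⟨hx, hm⟩
      obtain ⟨hxp, hxL⟩ := pts_isPoint hlines hLA hx
      exact ⟨hxp, hm, hxL⟩
  rw [hset, Set.ncard_coe_finset] at h3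
  exact h3

variable (A) in
/-- the global finset of triple points -/
noncomputable def T3 : Finset (Submodule ℂ V3) :=
  (((A ×ˢ A).filter (fun z => z.1 ≠ z.2)).image (fun z => z.1 ⊓ z.2)).filter
    (fun x => mult A x = 3)

lemma T3_isPoint {x : Submodule ℂ V3} (hx : x ∈ T3 A) : IsPoint x ∧ mult A x = 3 := by
  rw [T3, Finset.mem_filter, Finset.mem_image] at hx
  obtain ⟨⟨z, hz, rfl⟩, hm⟩ := hx
  rw [Finset.mem_filter, Finset.mem_product] at hz
  exact ⟨line_inf_point (hlines z.1 hz.1.1) (hlines z.2 hz.1.2) hz.2, hm⟩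

lemma mem_T3 {x : Submodule ℂ V3} (hx : IsPoint x) (hm : mult A x = 3) : x ∈ T3 A := by
  have h2 : 2 ≤ (A.filter (fun L => x ≤ L)).card := by rw [← mult_eq_card, hm]; omega
  obtain ⟨M, hM, N, hN, hMN⟩ := Finset.one_lt_card.1 h2
  rw [Finset.mem_filter] at hM hN
  rw [T3, Finset.mem_filter, Finset.mem_image]
  refine ⟨⟨(M, N), ?_, ?_⟩, hm⟩
  · rw [Finset.mem_filter, Finset.mem_product]; exact ⟨⟨hM.1, hN.1⟩, hMN⟩
  · exact (point_eq_inf hx (hlines M hM.1) (hlines N hN.1) hMN hM.2 hN.2).symm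

lemma T3_filter_line {L : Submodule ℂ V3} (hLA : L ∈ A) :
    (T3 A).filter (fun x => x ≤ L) = (pts A L).filter (fun x => mult A x = 3) := by
  ext x
  rw [Finset.mem_filter, Finset.mem_filter]
  constructor
  · rintro ⟨hx, hxL⟩
    obtain ⟨hxp, hm⟩ := T3_isPoint hlines hx
    exact ⟨mem_pts hlines hLA hxp hxL (by omega), hm⟩
  · rintro ⟨hx, hm⟩
    obtain ⟨hxp, hxL⟩ := pts_isPoint hlines hLA hx
    exact ⟨mem_T3 hlines hxp hm, hxL⟩

omit hlines in
/-- double counting triple-point/line incidences -/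
lemma triple_double_count :
    ∑ L ∈ A, ((T3 A).filter (fun x => x ≤ L)).card = 3 * (T3 A).card := by
  have : ∀ L ∈ A, ((T3 A).filter (fun x => x ≤ L)).card
      = ∑ x ∈ T3 A, if x ≤ L then 1 else 0 := by
    intro L _
    rw [Finset.card_filter]
  rw [Finset.sum_congr rfl this, Finset.sum_comm]
  have : ∀ x ∈ T3 A, (∑ L ∈ A, if x ≤ L then 1 else 0) = 3 := by
    intro x hx
    have hm : mult A x = 3 := (Finset.mem_filter.1 hx).2
    rw [mult_eq_card] at hm
    rw [← Finset.card_filter]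
    exact hm
  rw [Finset.sum_congr rfl this, Finset.sum_const, smul_eq_mul, mul_comm]

omit hlines in
lemma pts_mult2 {L x : Submodule ℂ V3} (hLA : L ∈ A) (hx : x ∈ pts A L) : 2 ≤ mult A x := by
  rw [pts, Finset.mem_image] at hx
  obtain ⟨M, hM, rfl⟩ := hx
  rw [mult_eq_card]
  apply Finset.one_lt_card.2
  refine ⟨M, ?_, L, ?_, Finset.ne_of_mem_erase hM⟩ <;> rw [Finset.mem_filter]
  · exact ⟨Finset.mem_of_mem_erase hM, inf_le_left⟩
  · exact ⟨hLA, inf_le_right⟩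

variable (hA : A.card = 9) (hm : ∀ p, IsPoint p → mult A p ≤ 4)
include hA hm


/-- On a line containing a unique quadruple point there are exactly 2 triple points. -/
lemma two_triples {L z : Submodule ℂ V3} (hLA : L ∈ A)
    (h3L : 3 ≤ ((pts A L).filter (fun x => 3 ≤ mult A x)).card)
    (hz : IsPoint z) (hzL : z ≤ L) (hz4 : mult A z = 4)
    (hnoq : ∀ x ∈ pts A L, mult A x = 4 → x = z) :
    ((pts A L).filter (fun x => mult A x = 3)).card = 2 := by
  have hzS : z ∈ pts A L := mem_pts hlines hLA hz hzL (by omega)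
  have sum8 : ∑ x ∈ pts A L, (mult A x - 1) = 8 := by rw [line_sum hlines hLA, hA]
  have hsplit : ∑ x ∈ (pts A L).erase z, (mult A x - 1) = 5 := by
    have h2 := Finset.add_sum_erase _ (fun x => mult A x - 1) hzS
    omega
  set TL := (pts A L).filter (fun x => mult A x = 3) with hTL
  have hTLsub : TL ⊆ (pts A L).erase z := by
    intro x hx
    rw [hTL, Finset.mem_filter] at hx
    refine Finset.mem_erase.2 ⟨?_, hx.1⟩
    intro h; rw [h, hz4] at hx; omega
  have hub : 2 * TL.card ≤ 5 := by
    calc 2 * TL.card = ∑ _x ∈ TL, 2 := by rw [Finset.sum_const, smul_eq_mul, mul_comm]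
    _ ≤ ∑ x ∈ TL, (mult A x - 1) := by
        apply Finset.sum_le_sum
        intro x hx
        rw [hTL, Finset.mem_filter] at hx
        omega
    _ ≤ ∑ x ∈ (pts A L).erase z, (mult A x - 1) := Finset.sum_le_sum_of_subset hTLsub
    _ ≤ 5 := le_of_eq hsplit
  have hlb : 2 ≤ TL.card := by
    have hsub : (pts A L).filter (fun x => 3 ≤ mult A x) ⊆ insert z TL := by
      intro x hx
      rw [Finset.mem_filter] at hx
      have hxp := (pts_isPoint hlines hLA hx.1).1
      have := hm x hxp
      rcases Nat.eq_or_lt_of_le hx.2 with h | h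
      · exact Finset.mem_insert.2 (Or.inr (Finset.mem_filter.2 ⟨hx.1, h.symm⟩))
      · exact Finset.mem_insert.2 (Or.inl (hnoq x hx.1 (by omega)))
    have := Finset.card_le_card hsub
    have := Finset.card_insert_le z TL
    omega
  omega

/-- On a line with no quadruple point there are 3 or 4 triple points. -/
lemma triples_of_noquad {L : Submodule ℂ V3} (hLA : L ∈ A)
    (h3L : 3 ≤ ((pts A L).filter (fun x => 3 ≤ mult A x)).card)
    (hnoq : ∀ x ∈ pts A L, mult A x ≠ 4) :
    3 ≤ ((pts A L).filter (fun x => mult A x = 3)).card ∧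
      ((pts A L).filter (fun x => mult A x = 3)).card ≤ 4 := by
  set TL := (pts A L).filter (fun x => mult A x = 3) with hTL
  have sum8 : ∑ x ∈ pts A L, (mult A x - 1) = 8 := by rw [line_sum hlines hLA, hA]
  have heq : (pts A L).filter (fun x => 3 ≤ mult A x) = TL := by
    apply Finset.filter_congr
    intro x hx
    have hxp := (pts_isPoint hlines hLA hx).1
    have h4 := hm x hxp
    have hne := hnoq x hx
    constructor
    · intro h; omega
    · intro h; omega
  rw [heq] at h3L
  refine ⟨h3L, ?_⟩
  have hub : 2 * TL.card ≤ 8 := by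
    calc 2 * TL.card = ∑ _x ∈ TL, 2 := by rw [Finset.sum_const, smul_eq_mul, mul_comm]
    _ ≤ ∑ x ∈ TL, (mult A x - 1) := by
        apply Finset.sum_le_sum
        intro x hx
        rw [hTL, Finset.mem_filter] at hx
        omega
    _ ≤ ∑ x ∈ pts A L, (mult A x - 1) := Finset.sum_le_sum_of_subset (Finset.filter_subset _ _)
    _ ≤ 8 := by omega
  omega

/-- On the line joining two quadruple points there is a unique third multiple point,
which is a triple point. -/
lemma third_point {L p q : Submodule ℂ V3} (hLA : L ∈ A)
    (h3L : 3 ≤ ((pts A L).filter (fun x => 3 ≤ mult A x)).card)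
    (hp : IsPoint p) (hq : IsPoint q) (hpq : p ≠ q) (hpL : p ≤ L) (hqL : q ≤ L)
    (hp4 : mult A p = 4) (hq4 : mult A q = 4) :
    ∃ s ∈ pts A L, mult A s = 3 ∧ s ≠ p ∧ s ≠ q ∧
      (∀ x ∈ pts A L, 3 ≤ mult A x → x = p ∨ x = q ∨ x = s) := by
  have hpS : p ∈ pts A L := mem_pts hlines hLA hp hpL (by omega)
  have hqS : q ∈ pts A L := mem_pts hlines hLA hq hqL (by omega)
  have sum8 : ∑ x ∈ pts A L, (mult A x - 1) = 8 := by rw [line_sum hlines hLA, hA]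
  have hqS' : q ∈ (pts A L).erase p := Finset.mem_erase.2 ⟨Ne.symm hpq, hqS⟩
  have hrest : ∑ x ∈ ((pts A L).erase p).erase q, (mult A x - 1) = 2 := by
    have h1 := Finset.add_sum_erase _ (fun x => mult A x - 1) hqS'
    have h2 := Finset.add_sum_erase _ (fun x => mult A x - 1) hpS
    omega
  -- find s
  have hex : ∃ s ∈ (pts A L).filter (fun x => 3 ≤ mult A x), s ≠ p ∧ s ≠ q := by
    by_contra h
    push_neg at h
    have hsub : (pts A L).filter (fun x => 3 ≤ mult A x) ⊆ {p, q} := by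
      intro x hx
      by_cases hxp : x = p
      · rw [hxp]; exact Finset.mem_insert_self _ _
      · rw [h x hx hxp]; exact Finset.mem_insert.2 (Or.inr (Finset.mem_singleton_self _))
    have hc1 := Finset.card_le_card hsub
    have hc2 : ({p, q} : Finset (Submodule ℂ V3)).card ≤ 2 :=
      le_trans (Finset.card_insert_le _ _) (by simp)
    omega
  obtain ⟨s, hsF, hsp, hsq⟩ := hex
  rw [Finset.mem_filter] at hsF
  obtain ⟨hsS, hs3⟩ := hsF
  have hsS' : s ∈ ((pts A L).erase p).erase q :=
    Finset.mem_erase.2 ⟨hsq, Finset.mem_erase.2 ⟨hsp, hsS⟩⟩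
  have hterm : mult A s - 1 ≤ 2 := by
    have h5 := Finset.single_le_sum (f := fun x => mult A x - 1)
      (fun x _ => Nat.zero_le _) hsS'
    omega
  have hs3' : mult A s = 3 := by omega
  refine ⟨s, hsS, hs3', hsp, hsq, ?_⟩
  intro x hxS hx3
  by_contra hcon
  push_neg at hcon
  obtain ⟨hxp, hxq, hxs⟩ := hcon
  have hxS' : x ∈ ((pts A L).erase p).erase q :=
    Finset.mem_erase.2 ⟨hxq, Finset.mem_erase.2 ⟨hxp, hxS⟩⟩
  have hsub : {x, s} ⊆ ((pts A L).erase p).erase q := by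
    intro z hz
    rcases Finset.mem_insert.1 hz with rfl | hz
    · exact hxS'
    · rw [Finset.mem_singleton.1 hz]; exact hsS'
  have hsum2 : ∑ z ∈ ({x, s} : Finset (Submodule ℂ V3)), (mult A z - 1) ≤ 2 := by
    rw [← hrest]
    exact Finset.sum_le_sum_of_subset hsub
  rw [Finset.sum_insert (by simp [hxs]), Finset.sum_singleton] at hsum2
  omega
end Count


section Helpers
variable {A : Finset (Submodule ℂ V3)}

lemma global_triple_sum (hlines : ∀ L ∈ A, IsLine L) :
    ∑ L ∈ A, ((pts A L).filter (fun x => mult A x = 3)).card = 3 * (T3 A).card := by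
  rw [← triple_double_count]
  exact Finset.sum_congr rfl (fun L hL => by rw [T3_filter_line hlines hL])

lemma pencil_inter_card (hlines : ∀ L ∈ A, IsLine L) {r p : Submodule ℂ V3}
    (hr : IsPoint r) (hp : IsPoint p) (hrp : r ≠ p) :
    ((A.filter (fun L => r ≤ L)) ∩ (A.filter (fun L => p ≤ L))).card ≤ 1 := by
  apply Finset.card_le_one.2
  intro a ha b hb
  simp only [Finset.mem_inter, Finset.mem_filter] at ha hb
  exact line_unique hr hp hrp (hlines a ha.1.1) (hlines b hb.1.1)
    ha.1.2 ha.2.2 hb.1.2 hb.2.2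

lemma li_of_points {v1 v2 v3 : V3} (h1 : v1 ≠ 0) (h2 : v2 ≠ 0)
    (hne : span ℂ {v1} ≠ (span ℂ {v2} : Submodule ℂ V3)) (h3 : v3 ∉ span ℂ ({v1, v2} : Set V3)) :
    LinearIndependent ℂ ![v1, v2, v3] := by
  rw [Fintype.linearIndependent_iff]
  intro g hg
  rw [Fin.sum_univ_three] at hg
  simp only [Matrix.cons_val_zero, Matrix.cons_val_one, Matrix.head_cons,
    Matrix.cons_val_two, Matrix.tail_cons] at hg
  have hg2 : g 2 = 0 := by
    by_contra hg2
    apply h3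
    have hv3 : (-((g 2)⁻¹ * g 0)) • v1 + (-((g 2)⁻¹ * g 1)) • v2 = v3 := by
      have h := congrArg (fun w => (g 2)⁻¹ • w) hg
      simp only [smul_add, smul_smul, smul_zero] at h
      rw [inv_mul_cancel₀ hg2, one_smul] at h
      linear_combination (norm := module) -h
    exact mem_span_pair.2 ⟨_, _, hv3⟩
  rw [hg2, zero_smul, add_zero] at hg
  have hg1 : g 1 = 0 := by
    by_contra hg1
    apply hne
    have hv2 : v2 ∈ span ℂ ({v1} : Set V3) := by
      rw [mem_span_singleton]
      exact ⟨-(g 1)⁻¹ * g 0, by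
        have h := congrArg (fun w => (g 1)⁻¹ • w) hg
        simp only [smul_add, smul_smul, smul_zero] at h
        rw [inv_mul_cancel₀ hg1, one_smul] at h
        linear_combination (norm := module) -h⟩
    have hle : span ℂ {v2} ≤ span ℂ ({v1} : Set V3) :=
      span_le.2 (by rintro z rfl; exact hv2)
    exact (point_le_point (isPoint_span h2) (isPoint_span h1) hle).symm
  rw [hg1, zero_smul, add_zero] at hg
  have hg0 : g 0 = 0 := by
    rcases smul_eq_zero.1 hg with h | h
    · exact h
    · exact absurd h h1
  intro i
  fin_cases i <;> assumption

lemma tri_swap12 {w1 w2 w3 : V3} (hli : LinearIndependent ℂ ![w1, w2, w3]) :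
    LinearIndependent ℂ ![w2, w1, w3] := by
  have h : ![w2, w1, w3] = ![w1, w2, w3] ∘ (Equiv.swap (0 : Fin 3) 1) := by
    ext i; fin_cases i <;> rfl
  rw [h]
  exact hli.comp _ (Equiv.injective _)

lemma tri_shear {w1 w2 w3 : V3} (hli : LinearIndependent ℂ ![w1, w2, w3]) :
    LinearIndependent ℂ ![w1 + w2, w1, w3] := by
  rw [Fintype.linearIndependent_iff]
  intro g hg
  rw [Fin.sum_univ_three] at hg
  simp only [Matrix.cons_val_zero, Matrix.cons_val_one, Matrix.head_cons,
    Matrix.cons_val_two, Matrix.tail_cons] at hg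
  have : (g 0 + g 1) • w1 + (g 0) • w2 + (g 2) • w3 = 0 := by
    linear_combination (norm := module) hg
  obtain ⟨e1, e2, e3⟩ := tri_coords hli this
  intro i
  fin_cases i <;> simp_all <;> linarith [e1]
end Helpers

lemma span_pair_add (w1 w2 : V3) :
    span ℂ ({w1 + w2, w1} : Set V3) = span ℂ ({w1, w2} : Set V3) := by
  apply le_antisymm
  · apply span_le.2
    rintro z hz
    rcases hz with rfl | hz
    · exact mem_span_pair.2 ⟨1, 1, by module⟩
    · rw [Set.mem_singleton_iff] at hz; subst hz
      exact mem_span_pair.2 ⟨1, 0, by module⟩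
  · apply span_le.2
    rintro z hz
    rcases hz with rfl | hz
    · exact mem_span_pair.2 ⟨0, 1, by module⟩
    · rw [Set.mem_singleton_iff] at hz; subst hz
      exact mem_span_pair.2 ⟨1, -1, by module⟩

/-- The main geometric lemma: there are no two distinct quadruple points. -/
lemma no_two_quads (A : Finset (Submodule ℂ V3))
    (hcard : A.card = 9) (hlines : ∀ L ∈ A, IsLine L)
    (hm : ∀ p, IsPoint p → mult A p ≤ 4)
    (h3 : ∀ L ∈ A, 3 ≤ ((pts A L).filter (fun x => 3 ≤ mult A x)).card)
    {p q : Submodule ℂ V3} (hp : IsPoint p) (hp4 : mult A p = 4)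
    (hq : IsPoint q) (hq4 : mult A q = 4) (hne : p ≠ q) : False := by
  classical
  set Fp := A.filter (fun L => p ≤ L) with hFp_def
  set Fq := A.filter (fun L => q ≤ L) with hFq_def
  have hFp4 : Fp.card = 4 := by rw [hFp_def, ← mult_eq_card, hp4]
  have hFq4 : Fq.card = 4 := by rw [hFq_def, ← mult_eq_card, hq4]
  have hlinepq : IsLine (p ⊔ q) := sup_of_points hp hq hne
  have hinter : ∀ L, L ∈ Fp → L ∈ Fq → L = p ⊔ q := by
    intro L hLp hLq
    rw [hFp_def, Finset.mem_filter] at hLp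
    rw [hFq_def, Finset.mem_filter] at hLq
    exact line_eq_sup hp hq hne (hlines L hLp.1) hLp.2 hLq.2
  -- case distinction
  by_cases hpqA : p ⊔ q ∈ A
  · -- Case 2: the line joining p and q belongs to the arrangement
    have hppq : p ≤ p ⊔ q := le_sup_left
    have hqpq : q ≤ p ⊔ q := le_sup_right
    have hpqFp : p ⊔ q ∈ Fp := Finset.mem_filter.2 ⟨hpqA, hppq⟩
    have hpqFq : p ⊔ q ∈ Fq := Finset.mem_filter.2 ⟨hpqA, hqpq⟩
    have hcap : Fp ∩ Fq = {p ⊔ q} := by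
      apply Finset.Subset.antisymm
      · intro L hL
        rw [Finset.mem_inter] at hL
        rw [Finset.mem_singleton]
        exact hinter L hL.1 hL.2
      · intro L hL
        rw [Finset.mem_singleton] at hL
        subst hL
        exact Finset.mem_inter.2 ⟨hpqFp, hpqFq⟩
    have hunion7 : (Fp ∪ Fq).card = 7 := by
      have h := Finset.card_union_add_card_inter Fp Fq
      rw [hcap, hFp4, hFq4, Finset.card_singleton] at h
      omega
    have hsub : Fp ∪ Fq ⊆ A := by
      intro L hL
      rcases Finset.mem_union.1 hL with h | h <;> exact (Finset.mem_filter.1 h).1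
    have hsd2 : (A \ (Fp ∪ Fq)).card = 2 := by
      rw [Finset.card_sdiff_of_subset hsub, hcard, hunion7]
    obtain ⟨C1, C2, hC12, hD⟩ := Finset.card_eq_two.1 hsd2
    have hC1mem : C1 ∈ A \ (Fp ∪ Fq) := by rw [hD]; exact Finset.mem_insert_self _ _
    have hC2mem : C2 ∈ A \ (Fp ∪ Fq) := by
      rw [hD]; exact Finset.mem_insert.2 (Or.inr (Finset.mem_singleton_self _))
    rw [Finset.mem_sdiff, Finset.mem_union] at hC1mem hC2mem
    obtain ⟨hC1A, hC1not⟩ := hC1mem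
    obtain ⟨hC2A, hC2not⟩ := hC2mem
    have hC1p : ¬ p ≤ C1 := fun h => hC1not (Or.inl (Finset.mem_filter.2 ⟨hC1A, h⟩))
    have hC1q : ¬ q ≤ C1 := fun h => hC1not (Or.inr (Finset.mem_filter.2 ⟨hC1A, h⟩))
    have hC2p : ¬ p ≤ C2 := fun h => hC2not (Or.inl (Finset.mem_filter.2 ⟨hC2A, h⟩))
    have hC2q : ¬ q ≤ C2 := fun h => hC2not (Or.inr (Finset.mem_filter.2 ⟨hC2A, h⟩))
    -- the third multiple point s on the line p ⊔ q
    obtain ⟨s, hsS, hs3, hsp, hsq, huniq⟩ :=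
      third_point hlines hcard hm hpqA (h3 _ hpqA) hp hq hne hppq hqpq hp4 hq4
    obtain ⟨hs_pt, hs_le⟩ := pts_isPoint hlines hpqA hsS
    -- s lies on C1 and C2
    have hFs3 : (A.filter (fun L => s ≤ L)).card = 3 := by rw [← mult_eq_card, hs3]
    have hpqFs : p ⊔ q ∈ A.filter (fun L => s ≤ L) := Finset.mem_filter.2 ⟨hpqA, hs_le⟩
    have hsubFs : (A.filter (fun L => s ≤ L)).erase (p ⊔ q) ⊆ A \ (Fp ∪ Fq) := by
      intro M hM
      rw [Finset.mem_erase, Finset.mem_filter] at hM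
      obtain ⟨hMne, hMA, hsM⟩ := hM
      rw [Finset.mem_sdiff, Finset.mem_union]
      refine ⟨hMA, ?_⟩
      rintro (h | h)
      · apply hMne
        rw [line_eq_sup hp hs_pt (Ne.symm hsp) (hlines M hMA) (Finset.mem_filter.1 h).2 hsM,
          ← line_eq_sup hp hs_pt (Ne.symm hsp) hlinepq hppq hs_le]
      · apply hMne
        rw [line_eq_sup hq hs_pt (Ne.symm hsq) (hlines M hMA) (Finset.mem_filter.1 h).2 hsM,
          ← line_eq_sup hq hs_pt (Ne.symm hsq) hlinepq hqpq hs_le]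
    have hFsD : (A.filter (fun L => s ≤ L)).erase (p ⊔ q) = A \ (Fp ∪ Fq) := by
      apply Finset.eq_of_subset_of_card_le hsubFs
      rw [hsd2, Finset.card_erase_of_mem hpqFs, hFs3]
    have hsC1 : s ≤ C1 := by
      have : C1 ∈ (A.filter (fun L => s ≤ L)).erase (p ⊔ q) := by
        rw [hFsD, Finset.mem_sdiff, Finset.mem_union]; exact ⟨hC1A, fun h => hC1not h⟩
      exact (Finset.mem_filter.1 (Finset.mem_of_mem_erase this)).2
    have hsC2 : s ≤ C2 := by
      have : C2 ∈ (A.filter (fun L => s ≤ L)).erase (p ⊔ q) := by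
        rw [hFsD, Finset.mem_sdiff, Finset.mem_union]; exact ⟨hC2A, fun h => hC2not h⟩
      exact (Finset.mem_filter.1 (Finset.mem_of_mem_erase this)).2
    have hsinf : s = C1 ⊓ C2 :=
      point_eq_inf hs_pt (hlines C1 hC1A) (hlines C2 hC2A) hC12 hsC1 hsC2
    -- no third quadruple point
    have hnoq3 : ∀ r, IsPoint r → mult A r = 4 → r = p ∨ r = q := by
      intro r hr hr4
      by_contra hcon
      push_neg at hcon
      obtain ⟨hrp, hrq⟩ := hcon
      set Fr := A.filter (fun L => r ≤ L) with hFr_def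
      have hFr4 : Fr.card = 4 := by rw [hFr_def, ← mult_eq_card, hr4]
      have h1 := pencil_inter_card hlines hr hp hrp
      have h2 := pencil_inter_card hlines hr hq hrq
      rw [← hFr_def, ← hFp_def] at h1
      rw [← hFr_def, ← hFq_def] at h2
      have hsub2 : Fr ⊆ (Fr ∩ Fp) ∪ ((Fr ∩ Fq) ∪ (Fr ∩ (A \ (Fp ∪ Fq)))) := by
        intro L hL
        have hLA : L ∈ A := (Finset.mem_filter.1 hL).1
        by_cases hLp : L ∈ Fp
        · exact Finset.mem_union.2 (Or.inl (Finset.mem_inter.2 ⟨hL, hLp⟩))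
        by_cases hLq : L ∈ Fq
        · exact Finset.mem_union.2 (Or.inr (Finset.mem_union.2
            (Or.inl (Finset.mem_inter.2 ⟨hL, hLq⟩))))
        · refine Finset.mem_union.2 (Or.inr (Finset.mem_union.2
            (Or.inr (Finset.mem_inter.2 ⟨hL, ?_⟩))))
          rw [Finset.mem_sdiff, Finset.mem_union]
          exact ⟨hLA, fun h => h.elim hLp hLq⟩
      have hcard3 := Finset.card_le_card hsub2
      have hu1 := Finset.card_union_le (Fr ∩ Fq) (Fr ∩ (A \ (Fp ∪ Fq)))
      have hu2 := Finset.card_union_le (Fr ∩ Fp) ((Fr ∩ Fq) ∪ (Fr ∩ (A \ (Fp ∪ Fq))))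
      have hDsub : Fr ∩ (A \ (Fp ∪ Fq)) ⊆ A \ (Fp ∪ Fq) := Finset.inter_subset_right
      have hge2 : 2 ≤ (Fr ∩ (A \ (Fp ∪ Fq))).card := by omega
      have hDeq : Fr ∩ (A \ (Fp ∪ Fq)) = A \ (Fp ∪ Fq) :=
        Finset.eq_of_subset_of_card_le hDsub (by omega)
      have hrC1 : r ≤ C1 := by
        have : C1 ∈ Fr ∩ (A \ (Fp ∪ Fq)) := by
          rw [hDeq, Finset.mem_sdiff, Finset.mem_union]
          exact ⟨hC1A, fun h => hC1not h⟩
        exact (Finset.mem_filter.1 (Finset.mem_inter.1 this).1).2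
      have hrC2 : r ≤ C2 := by
        have : C2 ∈ Fr ∩ (A \ (Fp ∪ Fq)) := by
          rw [hDeq, Finset.mem_sdiff, Finset.mem_union]
          exact ⟨hC2A, fun h => hC2not h⟩
        exact (Finset.mem_filter.1 (Finset.mem_inter.1 this).1).2
      have : r = C1 ⊓ C2 :=
        point_eq_inf hr (hlines C1 hC1A) (hlines C2 hC2A) hC12 hrC1 hrC2
      rw [← hsinf] at this
      rw [this, hs3] at hr4
      omega
    -- triple counts on each line
    have hTpq : ((pts A (p ⊔ q)).filter (fun x => mult A x = 3)).card = 1 := by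
      rw [Finset.card_eq_one]
      refine ⟨s, Finset.eq_singleton_iff_unique_mem.2 ⟨Finset.mem_filter.2 ⟨hsS, hs3⟩, ?_⟩⟩
      intro x hx
      rw [Finset.mem_filter] at hx
      rcases huniq x hx.1 (by omega) with rfl | rfl | rfl
      · rw [hp4] at hx; omega
      · rw [hq4] at hx; omega
      · rfl
    have hTP : ∀ L ∈ Fp.erase (p ⊔ q),
        ((pts A L).filter (fun x => mult A x = 3)).card = 2 := by
      intro L hL
      rw [Finset.mem_erase] at hL
      obtain ⟨hLne, hLFp⟩ := hL
      have hLA : L ∈ A := (Finset.mem_filter.1 hLFp).1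
      have hpL : p ≤ L := (Finset.mem_filter.1 hLFp).2
      apply two_triples hlines hcard hm hLA (h3 L hLA) hp hpL hp4
      intro x hx hx4
      obtain ⟨hxp, hxL⟩ := pts_isPoint hlines hLA hx
      rcases hnoq3 x hxp hx4 with rfl | rfl
      · rfl
      · exact absurd (line_eq_sup hp hxp hne (hlines L hLA) hpL hxL) hLne
    have hTQ : ∀ L ∈ Fq.erase (p ⊔ q),
        ((pts A L).filter (fun x => mult A x = 3)).card = 2 := by
      intro L hL
      rw [Finset.mem_erase] at hL
      obtain ⟨hLne, hLFq⟩ := hL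
      have hLA : L ∈ A := (Finset.mem_filter.1 hLFq).1
      have hqL : q ≤ L := (Finset.mem_filter.1 hLFq).2
      apply two_triples hlines hcard hm hLA (h3 L hLA) hq hqL hq4
      intro x hx hx4
      obtain ⟨hxp, hxL⟩ := pts_isPoint hlines hLA hx
      rcases hnoq3 x hxp hx4 with rfl | rfl
      · exact absurd (line_eq_sup hxp hq (Ne.symm hne).symm (hlines L hLA) hxL hqL) hLne
      · rfl
    have hTC1' : 3 ≤ ((pts A C1).filter (fun x => mult A x = 3)).card ∧
        ((pts A C1).filter (fun x => mult A x = 3)).card ≤ 4 := by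
      apply triples_of_noquad hlines hcard hm hC1A (h3 C1 hC1A)
      intro x hx hx4
      obtain ⟨hxp, hxL⟩ := pts_isPoint hlines hC1A hx
      rcases hnoq3 x hxp hx4 with rfl | rfl
      · exact hC1p hxL
      · exact hC1q hxL
    have hTC2' : 3 ≤ ((pts A C2).filter (fun x => mult A x = 3)).card ∧
        ((pts A C2).filter (fun x => mult A x = 3)).card ≤ 4 := by
      apply triples_of_noquad hlines hcard hm hC2A (h3 C2 hC2A)
      intro x hx hx4
      obtain ⟨hxp, hxL⟩ := pts_isPoint hlines hC2A hx
      rcases hnoq3 x hxp hx4 with rfl | rfl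
      · exact hC2p hxL
      · exact hC2q hxL
    -- global count: both C1 and C2 carry exactly 4 triple points
    have hFPe : (Fp.erase (p ⊔ q)).card = 3 := by
      rw [Finset.card_erase_of_mem hpqFp, hFp4]
    have hFQe : (Fq.erase (p ⊔ q)).card = 3 := by
      rw [Finset.card_erase_of_mem hpqFq, hFq4]
    have hfC1 : ((pts A C1).filter (fun x => mult A x = 3)).card = 4 ∧
        ((pts A C2).filter (fun x => mult A x = 3)).card = 4 := by
      have hglobal := global_triple_sum hlines
      have hAeq : A = (Fp ∪ Fq) ∪ (A \ (Fp ∪ Fq)) :=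
        (Finset.union_sdiff_of_subset hsub).symm
      have hdisj2 : Disjoint (Fp ∪ Fq) (A \ (Fp ∪ Fq)) := Finset.disjoint_sdiff
      have key : ∑ L ∈ (Fp ∪ Fq) ∪ (A \ (Fp ∪ Fq)),
          ((pts A L).filter (fun x => mult A x = 3)).card = 3 * (T3 A).card := by
        rw [← hAeq]; exact hglobal
      have hunion_eq : Fp ∪ Fq = insert (p ⊔ q) ((Fp.erase (p ⊔ q)) ∪ (Fq.erase (p ⊔ q))) := by
        ext L
        rw [Finset.mem_insert, Finset.mem_union, Finset.mem_union,
          Finset.mem_erase, Finset.mem_erase]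
        constructor
        · intro h
          by_cases hL : L = p ⊔ q
          · exact Or.inl hL
          · rcases h with h | h
            · exact Or.inr (Or.inl ⟨hL, h⟩)
            · exact Or.inr (Or.inr ⟨hL, h⟩)
        · rintro (rfl | (⟨_, h⟩ | ⟨_, h⟩))
          · exact Or.inl hpqFp
          · exact Or.inl h
          · exact Or.inr h
      have hdisj3 : Disjoint (Fp.erase (p ⊔ q)) (Fq.erase (p ⊔ q)) := by
        rw [Finset.disjoint_left]
        intro L hL1 hL2
        rw [Finset.mem_erase] at hL1 hL2
        exact hL1.1 (hinter L hL1.2 hL2.2)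
      have hnot_mem : p ⊔ q ∉ (Fp.erase (p ⊔ q)) ∪ (Fq.erase (p ⊔ q)) := by
        rw [Finset.mem_union]
        rintro (h | h) <;> exact (Finset.mem_erase.1 h).1 rfl
      rw [Finset.sum_union hdisj2, hD, Finset.sum_pair hC12, hunion_eq,
        Finset.sum_insert hnot_mem, Finset.sum_union hdisj3] at key
      rw [Finset.sum_congr rfl hTP, Finset.sum_congr rfl hTQ, Finset.sum_const, Finset.sum_const,
        hFPe, hFQe, hTpq] at key
      simp only [smul_eq_mul] at key
      omega
    obtain ⟨hfC1, hfC2⟩ := hfC1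
    -- coordinates
    obtain ⟨v1', hv1'ne, hpv1'⟩ := point_gen hp
    obtain ⟨v2', hv2'ne, hqv2'⟩ := point_gen hq
    obtain ⟨w, hwne, hsw⟩ := point_gen hs_pt
    have hpq_span' : p ⊔ q = span ℂ ({v1', v2'} : Set V3) := by
      rw [hpv1', hqv2', span_insert]
    have hw_pq : w ∈ p ⊔ q := hs_le (by rw [hsw]; exact mem_span_singleton_self w)
    rw [hpq_span'] at hw_pq
    obtain ⟨a, b, hab⟩ := mem_span_pair.1 hw_pq
    have ha : a ≠ 0 := by
      rintro rfl
      apply hsq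
      rw [hsw]
      have hb : b ≠ 0 := by
        rintro rfl
        apply hwne
        rw [← hab]; module
      rw [show w = b • v2' by rw [← hab]; module]
      rw [hqv2']
      exact span_singleton_smul_eq (isUnit_iff_ne_zero.2 hb) v2'
    have hb : b ≠ 0 := by
      rintro rfl
      apply hsp
      rw [hsw]
      rw [show w = a • v1' by rw [← hab]; module]
      rw [hpv1']
      exact span_singleton_smul_eq (isUnit_iff_ne_zero.2 ha) v1'
    set v1 := a • v1' with hv1_def
    set v2 := b • v2' with hv2_def
    have hv1ne : v1 ≠ 0 := smul_ne_zero ha hv1'ne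
    have hv2ne : v2 ≠ 0 := smul_ne_zero hb hv2'ne
    have hpv1 : p = span ℂ {v1} := by
      rw [hpv1', hv1_def, span_singleton_smul_eq (isUnit_iff_ne_zero.2 ha) v1']
    have hqv2 : q = span ℂ {v2} := by
      rw [hqv2', hv2_def, span_singleton_smul_eq (isUnit_iff_ne_zero.2 hb) v2']
    have hw12 : w = v1 + v2 := hab.symm
    have hsv12 : s = span ℂ {v1 + v2} := by rw [hsw, hw12]
    have hpqv12 : p ⊔ q = span ℂ ({v1, v2} : Set V3) := by
      rw [hpv1, hqv2, span_insert]
    have hpqne_top : p ⊔ q ≠ ⊤ := by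
      intro h
      have h2 : Module.finrank ℂ ↥(p ⊔ q) = 2 := hlinepq
      rw [h, finrank_top, finrank_V3] at h2
      omega
    obtain ⟨v3, hv3⟩ : ∃ v3, v3 ∉ p ⊔ q := by
      by_contra h
      push_neg at h
      exact hpqne_top (eq_top_iff'.2 h)
    have hv3' : v3 ∉ span ℂ ({v1, v2} : Set V3) := by rw [← hpqv12]; exact hv3
    have hli : LinearIndependent ℂ ![v1, v2, v3] :=
      li_of_points hv1ne hv2ne (by rw [← hpv1, ← hqv2]; exact hne) hv3'
    -- classify lines through p, q, s
    have hclassP : ∀ L ∈ Fp.erase (p ⊔ q), ∃ m : ℂ, L = span ℂ {v1, m • v2 + v3} := by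
      intro L hL
      rw [Finset.mem_erase] at hL
      have hLA : L ∈ A := (Finset.mem_filter.1 hL.2).1
      apply line_through_classify hli (hlines L hLA)
      · rw [← hpv1]; exact (Finset.mem_filter.1 hL.2).2
      · rw [← hpqv12]; exact hL.1
    choose! mfun hmfun using hclassP
    have hclassQ : ∀ L ∈ Fq.erase (p ⊔ q), ∃ n : ℂ, L = span ℂ {v2, n • v1 + v3} := by
      intro L hL
      rw [Finset.mem_erase] at hL
      have hLA : L ∈ A := (Finset.mem_filter.1 hL.2).1
      apply line_through_classify (tri_swap12 hli) (hlines L hLA)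
      · rw [← hqv2]; exact (Finset.mem_filter.1 hL.2).2
      · rw [Set.pair_comm, ← hpqv12]; exact hL.1
    choose! nfun hnfun using hclassQ
    have hclassC : ∀ C, C ∈ A → ¬ p ≤ C → s ≤ C → ∃ c : ℂ, C = span ℂ {v1 + v2, c • v1 + v3} := by
      intro C hCA hCp hsC
      apply line_through_classify (tri_shear hli) (hlines C hCA)
      · rw [← hsv12]; exact hsC
      · rw [span_pair_add, ← hpqv12]
        intro h
        exact hCp (h ▸ hppq)
    obtain ⟨c1, hc1⟩ := hclassC C1 hC1A hC1p hsC1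
    obtain ⟨c2, hc2⟩ := hclassC C2 hC2A hC2p hsC2
    have hc1c2 : c1 ≠ c2 := by
      intro h
      apply hC12
      rw [hc1, hc2, h]
    -- the key sum identity for a conic line C
    have key : ∀ C C' : Submodule ℂ V3, ∀ cc : ℂ, C ∈ A → C' ∈ A → C ≠ C' →
        ¬ p ≤ C → ¬ q ≤ C → s ≤ C → s ≤ C' →
        A \ (Fp ∪ Fq) = {C, C'} →
        C = span ℂ {v1 + v2, cc • v1 + v3} →
        ((pts A C).filter (fun x => mult A x = 3)).card = 4 →
        (∑ L ∈ Fq.erase (p ⊔ q), nfun L) = (∑ L ∈ Fp.erase (p ⊔ q), mfun L) + 3 * cc := by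
      intro C C' cc hCA hC'A hCC' hCp hCq hsC hsC' hDCC hCspan hT4
      have hsinfC : s = C ⊓ C' :=
        point_eq_inf hs_pt (hlines C hCA) (hlines C' hC'A) hCC' hsC hsC'
      set S1 := ((pts A C).filter (fun x => mult A x = 3)).erase s with hS1_def
      have hsT : s ∈ (pts A C).filter (fun x => mult A x = 3) :=
        Finset.mem_filter.2 ⟨mem_pts hlines hCA hs_pt hsC (by omega), hs3⟩
      have hS1card : S1.card = 3 := by
        rw [hS1_def, Finset.card_erase_of_mem hsT, hT4]
      -- each x in S1 lies on exactly one line of Fp.erase pq and one of Fq.erase pq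
      have hxline : ∀ x ∈ S1, (∃ P ∈ Fp.erase (p ⊔ q), x ≤ P) ∧
          (∃ Q ∈ Fq.erase (p ⊔ q), x ≤ Q) := by
        intro x hx
        rw [hS1_def, Finset.mem_erase, Finset.mem_filter] at hx
        obtain ⟨hxs, hxpts, hx3⟩ := hx
        obtain ⟨hx_pt, hxC⟩ := pts_isPoint hlines hCA hxpts
        set Fx := A.filter (fun L => x ≤ L) with hFx_def
        have hFx3 : Fx.card = 3 := by rw [hFx_def, ← mult_eq_card, hx3]
        have hxp : x ≠ p := by intro h; rw [h, hp4] at hx3; omega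
        have hxq : x ≠ q := by intro h; rw [h, hq4] at hx3; omega
        have hC'x : ¬ x ≤ C' := by
          intro h
          apply hxs
          rw [point_eq_inf hx_pt (hlines C hCA) (hlines C' hC'A) hCC' hxC h, ← hsinfC]
        have hpqx : ¬ x ≤ p ⊔ q := by
          intro h
          apply hxs
          have hCpq : p ⊔ q ≠ C := fun he => hCp (he ▸ hppq)
          rw [point_eq_inf hx_pt hlinepq (hlines C hCA) hCpq h hxC,
            ← point_eq_inf hs_pt hlinepq (hlines C hCA) hCpq hs_le hsC]
        have h1 := pencil_inter_card hlines hx_pt hp hxp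
        have h2 := pencil_inter_card hlines hx_pt hq hxq
        rw [← hFx_def, ← hFp_def] at h1
        rw [← hFx_def, ← hFq_def] at h2
        have hsubD : Fx ∩ (A \ (Fp ∪ Fq)) ⊆ {C} := by
          intro L hL
          rw [Finset.mem_inter, hDCC] at hL
          rcases Finset.mem_insert.1 hL.2 with rfl | h
          · exact Finset.mem_singleton_self _
          · rw [Finset.mem_singleton] at h
            subst h
            exact absurd (Finset.mem_filter.1 hL.1).2 hC'x
        have hsub2 : Fx ⊆ (Fx ∩ Fp) ∪ ((Fx ∩ Fq) ∪ (Fx ∩ (A \ (Fp ∪ Fq)))) := by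
          intro L hL
          have hLA : L ∈ A := (Finset.mem_filter.1 hL).1
          by_cases hLp : L ∈ Fp
          · exact Finset.mem_union.2 (Or.inl (Finset.mem_inter.2 ⟨hL, hLp⟩))
          by_cases hLq : L ∈ Fq
          · exact Finset.mem_union.2 (Or.inr (Finset.mem_union.2
              (Or.inl (Finset.mem_inter.2 ⟨hL, hLq⟩))))
          · refine Finset.mem_union.2 (Or.inr (Finset.mem_union.2
              (Or.inr (Finset.mem_inter.2 ⟨hL, ?_⟩))))
            rw [Finset.mem_sdiff, Finset.mem_union]
            exact ⟨hLA, fun h => h.elim hLp hLq⟩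
        have hcard1 := Finset.card_le_card hsub2
        have hu1 := Finset.card_union_le (Fx ∩ Fq) (Fx ∩ (A \ (Fp ∪ Fq)))
        have hu2 := Finset.card_union_le (Fx ∩ Fp) ((Fx ∩ Fq) ∪ (Fx ∩ (A \ (Fp ∪ Fq))))
        have hcd : (Fx ∩ (A \ (Fp ∪ Fq))).card ≤ 1 :=
          le_trans (Finset.card_le_card hsubD) (by simp)
        have hP1 : (Fx ∩ Fp).card = 1 := by omega
        have hQ1 : (Fx ∩ Fq).card = 1 := by omega
        obtain ⟨P, hP⟩ := Finset.card_eq_one.1 hP1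
        obtain ⟨Q, hQ⟩ := Finset.card_eq_one.1 hQ1
        have hPmem : P ∈ Fx ∩ Fp := by rw [hP]; exact Finset.mem_singleton_self _
        have hQmem : Q ∈ Fx ∩ Fq := by rw [hQ]; exact Finset.mem_singleton_self _
        rw [Finset.mem_inter] at hPmem hQmem
        have hPpq : P ≠ p ⊔ q := by
          intro h
          exact hpqx (h ▸ (Finset.mem_filter.1 hPmem.1).2)
        have hQpq : Q ≠ p ⊔ q := by
          intro h
          exact hpqx (h ▸ (Finset.mem_filter.1 hQmem.1).2)
        exact ⟨⟨P, Finset.mem_erase.2 ⟨hPpq, hPmem.2⟩, (Finset.mem_filter.1 hPmem.1).2⟩,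
          ⟨Q, Finset.mem_erase.2 ⟨hQpq, hQmem.2⟩, (Finset.mem_filter.1 hQmem.1).2⟩⟩
      have hPex : ∀ x ∈ S1, ∃ P, P ∈ Fp.erase (p ⊔ q) ∧ x ≤ P := by
        intro x hx
        obtain ⟨⟨P, h1, h2⟩, _⟩ := hxline x hx
        exact ⟨P, h1, h2⟩
      have hQex : ∀ x ∈ S1, ∃ Q, Q ∈ Fq.erase (p ⊔ q) ∧ x ≤ Q := by
        intro x hx
        obtain ⟨_, ⟨Q, h1, h2⟩⟩ := hxline x hx
        exact ⟨Q, h1, h2⟩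
      choose! Pf hPf1 hPf2 using hPex
      choose! Qf hQf1 hQf2 using hQex
      have hS1pts : ∀ x ∈ S1, IsPoint x ∧ x ≤ C := by
        intro x hx
        rw [hS1_def, Finset.mem_erase, Finset.mem_filter] at hx
        exact pts_isPoint hlines hCA hx.2.1
      -- the coordinate relation
      have hrel : ∀ x ∈ S1, nfun (Qf x) = mfun (Pf x) + cc := by
        intro x hx
        obtain ⟨hx_pt, hxC⟩ := hS1pts x hx
        have hxP : x ≤ span ℂ {v1, mfun (Pf x) • v2 + v3} := by
          rw [← hmfun (Pf x) (hPf1 x hx)]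
          exact hPf2 x hx
        have hxQ : x ≤ span ℂ {v2, nfun (Qf x) • v1 + v3} := by
          rw [← hnfun (Qf x) (hQf1 x hx)]
          exact hQf2 x hx
        have hgrid := grid_point hli hx_pt hxP hxQ
        have hmem : span ℂ {nfun (Qf x) • v1 + mfun (Pf x) • v2 + v3}
            ≤ span ℂ {v1 + v2, cc • v1 + v3} := by
          rw [← hgrid, ← hCspan]
          exact hxC
        exact (grid_mem_iff hli _ _ _).1 hmem
      -- injectivity of the induced maps
      have hCnotP : ∀ x ∈ S1, Pf x ≠ C := by
        intro x hx h
        apply hCp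
        rw [← h]
        exact (Finset.mem_filter.1 (Finset.mem_of_mem_erase (hPf1 x hx))).2
      have hCnotQ : ∀ x ∈ S1, Qf x ≠ C := by
        intro x hx h
        apply hCq
        rw [← h]
        exact (Finset.mem_filter.1 (Finset.mem_of_mem_erase (hQf1 x hx))).2
      have hPinj : ∀ x ∈ S1, ∀ y ∈ S1, Pf x = Pf y → x = y := by
        intro x hx y hy hxy
        obtain ⟨hx_pt, hxC⟩ := hS1pts x hx
        obtain ⟨hy_pt, hyC⟩ := hS1pts y hy
        have hPA : Pf x ∈ A :=
          (Finset.mem_filter.1 (Finset.mem_of_mem_erase (hPf1 x hx))).1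
        rw [point_eq_inf hx_pt (hlines _ hPA) (hlines C hCA) (hCnotP x hx) (hPf2 x hx) hxC,
          point_eq_inf hy_pt (hlines _ hPA) (hlines C hCA) (hCnotP x hx)
            (by rw [hxy] at *; exact hPf2 y hy) hyC]
      have hQinj : ∀ x ∈ S1, ∀ y ∈ S1, Qf x = Qf y → x = y := by
        intro x hx y hy hxy
        obtain ⟨hx_pt, hxC⟩ := hS1pts x hx
        obtain ⟨hy_pt, hyC⟩ := hS1pts y hy
        have hQA : Qf x ∈ A :=
          (Finset.mem_filter.1 (Finset.mem_of_mem_erase (hQf1 x hx))).1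
        rw [point_eq_inf hx_pt (hlines _ hQA) (hlines C hCA) (hCnotQ x hx) (hQf2 x hx) hxC,
          point_eq_inf hy_pt (hlines _ hQA) (hlines C hCA) (hCnotQ x hx)
            (by rw [hxy] at *; exact hQf2 y hy) hyC]
      -- images are everything
      have hPim : S1.image Pf = Fp.erase (p ⊔ q) := by
        apply Finset.eq_of_subset_of_card_le
        · intro L hL
          obtain ⟨x, hx, rfl⟩ := Finset.mem_image.1 hL
          exact hPf1 x hx
        · rw [Finset.card_image_of_injOn (fun x hx y hy => hPinj x hx y hy), hS1card, hFPe]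
      have hQim : S1.image Qf = Fq.erase (p ⊔ q) := by
        apply Finset.eq_of_subset_of_card_le
        · intro L hL
          obtain ⟨x, hx, rfl⟩ := Finset.mem_image.1 hL
          exact hQf1 x hx
        · rw [Finset.card_image_of_injOn (fun x hx y hy => hQinj x hx y hy), hS1card, hFQe]
      have e1 : ∑ x ∈ S1, mfun (Pf x) = ∑ L ∈ Fp.erase (p ⊔ q), mfun L := by
        rw [← hPim]
        exact (Finset.sum_image hPinj).symm
      have e2 : ∑ x ∈ S1, nfun (Qf x) = ∑ L ∈ Fq.erase (p ⊔ q), nfun L := by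
        rw [← hQim]
        exact (Finset.sum_image hQinj).symm
      have e3 : ∑ x ∈ S1, nfun (Qf x) = ∑ x ∈ S1, (mfun (Pf x) + cc) :=
        Finset.sum_congr rfl hrel
      rw [Finset.sum_add_distrib, Finset.sum_const, hS1card, e1, e2] at e3
      rw [e3]
      push_cast
      ring
    -- apply the key identity to C1 and C2
    have k1 := key C1 C2 c1 hC1A hC2A hC12 hC1p hC1q hsC1 hsC2 hD hc1 hfC1
    have k2 := key C2 C1 c2 hC2A hC1A (Ne.symm hC12) hC2p hC2q hsC2 hsC1
      (by rw [hD, Finset.pair_comm]) hc2 hfC2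
    rw [k1] at k2
    have hcc : c1 = c2 := by
      have h := add_left_cancel k2
      exact mul_left_cancel₀ (by norm_num : (3 : ℂ) ≠ 0) h
    exact hc1c2 hcc

  · -- Case 1: the joining line is not in the arrangement
    have hdisj : Disjoint Fp Fq := by
      rw [Finset.disjoint_left]
      intro L hLp hLq
      apply hpqA
      rw [← hinter L hLp hLq]
      exact (Finset.mem_filter.1 hLp).1
    have hsub : Fp ∪ Fq ⊆ A := by
      intro L hL
      rcases Finset.mem_union.1 hL with h | h <;> exact (Finset.mem_filter.1 h).1
    have hunion8 : (Fp ∪ Fq).card = 8 := by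
      rw [Finset.card_union_of_disjoint hdisj, hFp4, hFq4]
    have hsd1 : (A \ (Fp ∪ Fq)).card = 1 := by
      rw [Finset.card_sdiff_of_subset hsub, hcard, hunion8]
    obtain ⟨C, hC⟩ := Finset.card_eq_one.1 hsd1
    have hCmem : C ∈ A \ (Fp ∪ Fq) := by rw [hC]; exact Finset.mem_singleton_self _
    rw [Finset.mem_sdiff, Finset.mem_union] at hCmem
    obtain ⟨hCA, hCnot⟩ := hCmem
    have hCp : ¬ p ≤ C := fun h => hCnot (Or.inl (Finset.mem_filter.2 ⟨hCA, h⟩))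
    have hCq : ¬ q ≤ C := fun h => hCnot (Or.inr (Finset.mem_filter.2 ⟨hCA, h⟩))
    have hAeq : A = (Fp ∪ Fq) ∪ {C} := by
      rw [← hC, Finset.union_comm (Fp ∪ Fq), Finset.sdiff_union_of_subset hsub]
    -- no third quadruple point
    have hnoq3 : ∀ r, IsPoint r → mult A r = 4 → r = p ∨ r = q := by
      intro r hr hr4
      by_contra hcon
      push_neg at hcon
      obtain ⟨hrp, hrq⟩ := hcon
      set Fr := A.filter (fun L => r ≤ L) with hFr_def
      have hFr4 : Fr.card = 4 := by rw [hFr_def, ← mult_eq_card, hr4]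
      have h1 := pencil_inter_card hlines hr hp hrp
      have h2 := pencil_inter_card hlines hr hq hrq
      rw [← hFr_def, ← hFp_def] at h1
      rw [← hFr_def, ← hFq_def] at h2
      have hsub2 : Fr ⊆ (Fr ∩ Fp) ∪ ((Fr ∩ Fq) ∪ (Fr ∩ {C})) := by
        intro L hL
        have hLA : L ∈ A := (Finset.mem_filter.1 hL).1
        rw [hAeq] at hLA
        rcases Finset.mem_union.1 hLA with h | h
        · rcases Finset.mem_union.1 h with h' | h'
          · exact Finset.mem_union.2 (Or.inl (Finset.mem_inter.2 ⟨hL, h'⟩))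
          · exact Finset.mem_union.2 (Or.inr (Finset.mem_union.2
              (Or.inl (Finset.mem_inter.2 ⟨hL, h'⟩))))
        · exact Finset.mem_union.2 (Or.inr (Finset.mem_union.2
            (Or.inr (Finset.mem_inter.2 ⟨hL, h⟩))))
      have hcard3 : (Fr ∩ ({C} : Finset (Submodule ℂ V3))).card ≤ 1 :=
        le_trans (Finset.card_le_card (Finset.inter_subset_right)) (by simp)
      have := Finset.card_le_card hsub2
      have hu1 := Finset.card_union_le (Fr ∩ Fq) (Fr ∩ {C})
      have hu2 := Finset.card_union_le (Fr ∩ Fp) ((Fr ∩ Fq) ∪ (Fr ∩ {C}))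
      omega
    -- triple counts on each line
    have hTp : ∀ L ∈ Fp, ((pts A L).filter (fun x => mult A x = 3)).card = 2 := by
      intro L hL
      rw [hFp_def, Finset.mem_filter] at hL
      apply two_triples hlines hcard hm hL.1 (h3 L hL.1) hp hL.2 hp4
      intro x hx hx4
      obtain ⟨hxp, hxL⟩ := pts_isPoint hlines hL.1 hx
      rcases hnoq3 x hxp hx4 with rfl | rfl
      · rfl
      · exfalso
        apply hpqA
        rw [← line_eq_sup hp hq hne (hlines L hL.1) hL.2 hxL]
        exact hL.1
    have hTq : ∀ L ∈ Fq, ((pts A L).filter (fun x => mult A x = 3)).card = 2 := by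
      intro L hL
      rw [hFq_def, Finset.mem_filter] at hL
      apply two_triples hlines hcard hm hL.1 (h3 L hL.1) hq hL.2 hq4
      intro x hx hx4
      obtain ⟨hxp, hxL⟩ := pts_isPoint hlines hL.1 hx
      rcases hnoq3 x hxp hx4 with rfl | rfl
      · exfalso
        apply hpqA
        rw [← line_eq_sup hp hq hne (hlines L hL.1) hxL hL.2]
        exact hL.1
      · rfl
    have hTC : 3 ≤ ((pts A C).filter (fun x => mult A x = 3)).card ∧
        ((pts A C).filter (fun x => mult A x = 3)).card ≤ 4 := by
      apply triples_of_noquad hlines hcard hm hCA (h3 C hCA)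
      intro x hx hx4
      obtain ⟨hxp, hxL⟩ := pts_isPoint hlines hCA hx
      rcases hnoq3 x hxp hx4 with rfl | rfl
      · exact hCp hxL
      · exact hCq hxL
    -- global count
    have hglobal := global_triple_sum hlines
    have hdisj2 : Disjoint (Fp ∪ Fq) ({C} : Finset (Submodule ℂ V3)) := by
      rw [Finset.disjoint_right]
      intro x hx
      rw [Finset.mem_singleton] at hx
      subst hx
      exact hCnot ∘ Finset.mem_union.1
    have key : ∑ L ∈ (Fp ∪ Fq) ∪ {C}, ((pts A L).filter (fun x => mult A x = 3)).card
        = 3 * (T3 A).card := by rw [← hAeq]; exact hglobal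
    rw [Finset.sum_union hdisj2, Finset.sum_union hdisj, Finset.sum_singleton] at key
    rw [Finset.sum_congr rfl hTp, Finset.sum_congr rfl hTq, Finset.sum_const, Finset.sum_const,
      hFp4, hFq4] at key
    simp only [smul_eq_mul] at key
    omega


/-- if 𝒜 is an arrangement of 9 pairwise distinct lines in ℂℙ² with no
point of multiplicity ≥ 5 and such that every line passes through at least three
multiple points, then 𝒜 has at most one quadruple point. -/
theorem at_most_one_quadruple_point (A : Finset (Submodule ℂ V3))
    (hcard : A.card = 9) (hlines : ∀ L ∈ A, IsLine L)
    (hm : ∀ p, IsPoint p → mult A p ≤ 4)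
    (h3 : ∀ L ∈ A, 3 ≤ {p | IsPoint p ∧ 3 ≤ mult A p ∧ p ≤ L}.ncard) :
    nPts A 4 ≤ 1 := by
  classical
  have h3' : ∀ L ∈ A, 3 ≤ ((pts A L).filter (fun x => 3 ≤ mult A x)).card :=
    fun L hL => h3_finset hlines hL (h3 L hL)
  have hss : {p | IsPoint p ∧ mult A p = 4}.Subsingleton := by
    intro x hx y hy
    by_contra hxy
    exact no_two_quads A hcard hlines hm h3' hx.1 hx.2 hy.1 hy.2 hxy
  rw [nPts]
  rcases hss.eq_empty_or_singleton with h | ⟨a, h⟩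
  · rw [h]; simp
  · rw [h]; simp
end

section
/- Let γ₊ = (1+√5)/2, γ₋ = (1−√5)/2, and let A be the 3×3 complex matrix with rows (−γ₋, −1, 0), (−γ₋, 0, 0), (γ₋, 1, 1), acting on row vectors v ∈ ℂ³ by v ↦ v·A. Then A is invertible, and the linear automorphism v ↦ v·A of ℂ³ maps the plane {x = 0} onto {y = z}, the plane {x = γ₊(y−z)} onto {x + y = z}, the plane {y = z} onto {x = γ₋(y−z)}, the plane {x + y = z} onto {x = 0}, the plane {x = z} onto {y = 0}, the plane {x = γ₊y} onto {x + y = (γ₋+1)z}, the plane {y = 0} onto {x = γ₋y}, the plane {x + y = (γ₊+1)z} onto {x = z}, and the plane {z = 0} onto {z = 0}. -/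
/-- The line of ℂℙ² (2-dimensional subspace of ℂ³) with equation a·x + b·y + c·z = 0,
i.e. the kernel of the linear form (x, y, z) ↦ a·x + b·y + c·z. -/
noncomputable def lineOf (a b c : ℂ) : Submodule ℂ V3 :=
  LinearMap.ker
    (a • LinearMap.proj 0 + b • LinearMap.proj 1 + c • LinearMap.proj 2 : V3 →ₗ[ℂ] ℂ)

/-- γ₊ = (1+√5)/2 and γ₋ = (1−√5)/2, the two roots of x² − x − 1 = 0. -/
noncomputable def gammaP : ℂ := ((1 + Real.sqrt 5) / 2 : ℝ)

noncomputable def gammaM : ℂ := ((1 - Real.sqrt 5) / 2 : ℝ)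

/-- The matrix A with rows (−γ₋, −1, 0), (−γ₋, 0, 0), (γ₋, 1, 1),
acting on row vectors v ∈ ℂ³ by v ↦ v·A. -/
noncomputable def Amat : Matrix (Fin 3) (Fin 3) ℂ :=
  !![-gammaM, -1, 0; -gammaM, 0, 0; gammaM, 1, 1]


lemma sqrt5_sq' : (Real.sqrt 5 : ℂ) ^ 2 = 5 := by
  norm_cast
  rw [Real.sq_sqrt]; norm_num

lemma gammaM_sq : gammaM ^ 2 = gammaM + 1 := by
  have h := sqrt5_sq'
  unfold gammaM
  push_cast
  linear_combination h / 4

lemma gammaP_eq : gammaP = 1 - gammaM := by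
  unfold gammaP gammaM; push_cast; ring

lemma gammaM_ne : gammaM ≠ 0 := by
  intro h
  have h2 := gammaM_sq
  rw [h] at h2
  norm_num at h2

lemma gammaM_add_one_ne : gammaM + 1 ≠ 0 := by
  intro h
  have h2 := gammaM_sq
  have : gammaM = -1 := by linear_combination h
  rw [this] at h2
  norm_num at h2

lemma det_Amat : Amat.det = -gammaM := by
  simp [Amat, Matrix.det_fin_three]

lemma isUnit_det_Amat : IsUnit Amat.det := by
  rw [det_Amat, isUnit_iff_ne_zero]
  simpa using gammaM_ne

lemma mem_lineOf (a b c : ℂ) (v : V3) :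
    v ∈ lineOf a b c ↔ a * v 0 + b * v 1 + c * v 2 = 0 := by
  simp [lineOf, LinearMap.mem_ker]

lemma vecMul_Amat (v : V3) :
    Amat.vecMul v = ![gammaM * (v 2 - v 0 - v 1), v 2 - v 0, v 2] := by
  funext j
  fin_cases j <;>
    simp [Amat, Matrix.vecMul, dotProduct, Fin.sum_univ_three] <;> ring

lemma map_lineOf (a b c a' b' c' k : ℂ) (hk : k ≠ 0)
    (h : ∀ v : V3,
      a' * Amat.vecMul v 0 + b' * Amat.vecMul v 1 + c' * Amat.vecMul v 2 =
        k * (a * v 0 + b * v 1 + c * v 2)) :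
    Submodule.map Amat.vecMulLinear (lineOf a b c) = lineOf a' b' c' := by
  have hA := isUnit_det_Amat
  ext w
  simp only [Submodule.mem_map, mem_lineOf, Matrix.vecMulLinear_apply]
  constructor
  · rintro ⟨v, hv, rfl⟩
    rw [h v, hv, mul_zero]
  · intro hw
    refine ⟨Amat⁻¹.vecMul w, ?_, ?_⟩
    · have h2 := h (Amat⁻¹.vecMul w)
      rw [show Amat.vecMul (Amat⁻¹.vecMul w) = w by
        rw [Matrix.vecMul_vecMul, Matrix.nonsing_inv_mul _ hA, Matrix.vecMul_one]] at h2
      rw [hw] at h2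
      exact (mul_eq_zero.1 h2.symm).resolve_left hk
    · rw [Matrix.vecMul_vecMul, Matrix.nonsing_inv_mul _ hA, Matrix.vecMul_one]

/-- the matrix A is invertible and the linear automorphism v ↦ v·A of
ℂ³ maps the nine planes over the lines of FS⁺ onto the corresponding planes over the
lines of FS⁻, in the order stated. -/
theorem matrix_maps_FS_plus_to_FS_minus :
    IsUnit Amat ∧
    Submodule.map Amat.vecMulLinear (lineOf 1 0 0) = lineOf 0 1 (-1) ∧
    Submodule.map Amat.vecMulLinear (lineOf 1 (-gammaP) gammaP) = lineOf 1 1 (-1) ∧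
    Submodule.map Amat.vecMulLinear (lineOf 0 1 (-1)) = lineOf 1 (-gammaM) gammaM ∧
    Submodule.map Amat.vecMulLinear (lineOf 1 1 (-1)) = lineOf 1 0 0 ∧
    Submodule.map Amat.vecMulLinear (lineOf 1 0 (-1)) = lineOf 0 1 0 ∧
    Submodule.map Amat.vecMulLinear (lineOf 1 (-gammaP) 0) = lineOf 1 1 (-(gammaM + 1)) ∧
    Submodule.map Amat.vecMulLinear (lineOf 0 1 0) = lineOf 1 (-gammaM) 0 ∧
    Submodule.map Amat.vecMulLinear (lineOf 1 1 (-(gammaP + 1))) = lineOf 1 0 (-1) ∧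
    Submodule.map Amat.vecMulLinear (lineOf 0 0 1) = lineOf 0 0 1 := by
  
  refine ⟨Amat.isUnit_iff_isUnit_det.2 isUnit_det_Amat, ?_, ?_, ?_, ?_, ?_, ?_, ?_, ?_, ?_⟩
  · exact map_lineOf _ _ _ _ _ _ (-1) (by norm_num) fun v => by
      rw [vecMul_Amat]; simp [gammaP_eq]; ring
  · exact map_lineOf _ _ _ _ _ _ (-(gammaM + 1)) (neg_ne_zero.2 gammaM_add_one_ne) fun v => by
      rw [vecMul_Amat]; simp [gammaP_eq]; linear_combination (v 1 - v 2) * gammaM_sq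
  · exact map_lineOf _ _ _ _ _ _ (-gammaM) (by simpa using gammaM_ne) fun v => by
      rw [vecMul_Amat]; simp [gammaP_eq]; ring
  · exact map_lineOf _ _ _ _ _ _ (-gammaM) (by simpa using gammaM_ne) fun v => by
      rw [vecMul_Amat]; simp [gammaP_eq]; ring
  · exact map_lineOf _ _ _ _ _ _ (-1) (by norm_num) fun v => by
      rw [vecMul_Amat]; simp [gammaP_eq]; ring
  · exact map_lineOf _ _ _ _ _ _ (-(gammaM + 1)) (neg_ne_zero.2 gammaM_add_one_ne) fun v => by
      rw [vecMul_Amat]; simp [gammaP_eq]; linear_combination (v 1) * gammaM_sq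
  · exact map_lineOf _ _ _ _ _ _ (-gammaM) (by simpa using gammaM_ne) fun v => by
      rw [vecMul_Amat]; simp [gammaP_eq]; ring
  · exact map_lineOf _ _ _ _ _ _ (-gammaM) (by simpa using gammaM_ne) fun v => by
      rw [vecMul_Amat]; simp [gammaP_eq]; linear_combination (v 2) * gammaM_sq
  · exact map_lineOf _ _ _ _ _ _ 1 (by norm_num) fun v => by
      rw [vecMul_Amat]; simp [gammaP_eq]
end
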